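/- arXiv:2102.02023 — 6 statements merged into one kernel-verified Lean document; each statement's English description precedes it below -/
import Mathlib

section
/- Let f : [0,1] → [0,1] be continuous with f(0)=0, f(1)=1, f((0,1)) ⊆ (0,1), and suppose the right derivative f'(0) = lim_{x→0⁺} f(x)/x exists and is a finite positive real a. Then the conjugated map F = h ∘ f|_{(0,1)} ∘ h⁻¹ : ℝ → ℝ satisfies lim_{x→-∞} (F(x) - x) = log(a). -/
open Filter Topology Set

/-- The homeomorphism `h : (0,1) → ℝ` from Alsedà–Misiurewicz. -/
noncomputable def h (x : ℝ) : ℝ :=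
  if x ≤ 1/2 then Real.log x - Real.log (1/2) else Real.log (1/2) - Real.log (1 - x)

/-- The inverse of `h`. -/
noncomputable def hinv (y : ℝ) : ℝ :=
  if y ≤ 0 then Real.exp y / 2 else 1 - Real.exp (-y) / 2

/-!
Near `0` the map `h` is `log` up to an additive constant and `hinv` is its inverse `exp(·)/2`,
so for `x → -∞` and `t = hinv x → 0⁺` we get `F(x) - x = h (f t) - h t = log (f t / t)`,
which tends to `log a` because `f t / t → a > 0`.
-/

lemma hinv_of_nonpos {y : ℝ} (hy : y ≤ 0) : hinv y = Real.exp y / 2 := if_pos hy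

lemma h_hinv_of_nonpos {y : ℝ} (hy : y ≤ 0) : h (hinv y) = y := by
  have hle : Real.exp y / 2 ≤ 1 / 2 := by linarith [Real.exp_le_one_iff.mpr hy]
  rw [hinv_of_nonpos hy, h, if_pos hle, Real.log_div (Real.exp_pos y).ne' two_ne_zero,
    Real.log_exp, one_div, Real.log_inv]
  ring

lemma h_sub_h_of_le_half {s t : ℝ} (hs₀ : 0 < s) (hs : s ≤ 1 / 2) (ht₀ : 0 < t) (ht : t ≤ 1 / 2) :
    h s - h t = Real.log (s / t) := by
  rw [h, h, if_pos hs, if_pos ht, Real.log_div hs₀.ne' ht₀.ne']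
  ring

lemma tendsto_hinv_atBot : Tendsto hinv atBot (𝓝[>] 0) := by
  have hexp : Tendsto (fun y => Real.exp y / 2) atBot (𝓝[>] 0) :=
    tendsto_nhdsWithin_of_tendsto_nhds_of_eventually_within _
      (by simpa using Real.tendsto_exp_atBot.div_const 2)
      (Eventually.of_forall fun y => mem_Ioi.mpr (by positivity))
  exact hexp.congr' <| (eventually_le_atBot 0).mono fun y hy => (hinv_of_nonpos hy).symm

section RightDerivative

variable {f : ℝ → ℝ} {a : ℝ}

lemma tendsto_zero_of_tendsto_div_nhdsGT
    (hderiv : Tendsto (fun x => f x / x) (𝓝[>] 0) (𝓝 a)) : Tendsto f (𝓝[>] 0) (𝓝 0) := by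
  have hid : Tendsto (fun x : ℝ => x) (𝓝[>] 0) (𝓝 0) := nhdsWithin_le_nhds
  refine (mul_zero a ▸ hderiv.mul hid).congr' ?_
  filter_upwards [self_mem_nhdsWithin] with x (hx : 0 < x)
  exact div_mul_cancel₀ _ hx.ne'

lemma eventually_pos_of_tendsto_div (ha : 0 < a)
    (hderiv : Tendsto (fun x => f x / x) (𝓝[>] 0) (𝓝 a)) : ∀ᶠ x in 𝓝[>] 0, 0 < f x := by
  filter_upwards [hderiv.eventually_const_lt ha, self_mem_nhdsWithin] with x hq (hx : 0 < x)
  exact (div_pos_iff_of_pos_right hx).mp hq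

end RightDerivative

theorem conjugate_limit_atBot_general (f : ℝ → ℝ) (a : ℝ)
    (ha : 0 < a)
    (hderiv : Filter.Tendsto (fun x => f x / x) (nhdsWithin 0 (Set.Ioi 0)) (nhds a)) :
    Filter.Tendsto (fun x => h (f (hinv x)) - x) Filter.atBot (nhds (Real.log a)) := by
  have hlog : Tendsto (fun x => Real.log (f (hinv x) / hinv x)) atBot (𝓝 (Real.log a)) :=
    (Real.continuousAt_log ha.ne').tendsto.comp (hderiv.comp tendsto_hinv_atBot)
  have hf_small : ∀ᶠ t in 𝓝[>] 0, f t ≤ 1 / 2 :=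
    (tendsto_zero_of_tendsto_div_nhdsGT hderiv).eventually_le_const (by norm_num)
  have ht_small : ∀ᶠ t in 𝓝[>] (0 : ℝ), t ≤ 1 / 2 :=
    eventually_of_mem (Ioc_mem_nhdsGT (by norm_num)) fun _ ht => ht.2
  refine hlog.congr' ?_
  filter_upwards [eventually_le_atBot 0,
    tendsto_hinv_atBot.eventually (eventually_pos_of_tendsto_div ha hderiv),
    tendsto_hinv_atBot.eventually hf_small, tendsto_hinv_atBot.eventually ht_small,
    tendsto_hinv_atBot.eventually self_mem_nhdsWithin] with x hx hf₀ hf ht (ht₀ : 0 < hinv x)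
  rw [← h_sub_h_of_le_half hf₀ hf ht₀ ht, h_hinv_of_nonpos hx]

/-- if `f : [0,1] → [0,1]` is continuous, fixes `0` and `1`, maps `(0,1)`
into `(0,1)`, and has a finite positive right derivative `a` at `0`
(i.e. `f(x)/x → a` as `x → 0⁺`), then `F = h ∘ f ∘ h⁻¹` satisfies
`F(x) - x → log a` as `x → -∞`. -/
theorem conjugate_limit_atBot (f : ℝ → ℝ) (a : ℝ)
    (hf : ContinuousOn f (Set.Icc 0 1))
    (h0 : f 0 = 0) (h1 : f 1 = 1)
    (hoo : Set.MapsTo f (Set.Ioo 0 1) (Set.Ioo 0 1))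
    (ha : 0 < a)
    (hderiv : Filter.Tendsto (fun x => f x / x) (nhdsWithin 0 (Set.Ioi 0)) (nhds a)) :
    Filter.Tendsto (fun x => h (f (hinv x)) - x) Filter.atBot (nhds (Real.log a)) :=
  conjugate_limit_atBot_general f a ha hderiv
end

section
/- Let f : [0,1] → [0,1] be continuous with f(0)=0, f(1)=1, f((0,1)) ⊆ (0,1), and suppose the left derivative f'(1) = lim_{x→1⁻} (1-f(x))/(1-x) exists and is a finite positive real b. Then F = h ∘ f|_{(0,1)} ∘ h⁻¹ satisfies lim_{x→+∞} (F(x) - x) = -log(b). -/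
/-!
For `y > 0` we have `1 - hinv y = e^(-y) / 2`, and for `u > 1/2` we have `h u = -log 2 - log (1 - u)`.
Put `u = hinv y`, so `u → 1⁻` as `y → ∞`. Convergence of the difference quotient forces `f u → 1`,
so eventually `h (f u) - y = -log ((1 - f u) / (1 - u))`, which tends to `-log b`.
-/

open Filter Topology

lemma hinv_of_pos {y : ℝ} (hy : 0 < y) : hinv y = 1 - Real.exp (-y) / 2 := by
  simp [hinv, not_le.mpr hy]

lemma h_of_half_lt {u : ℝ} (hu : 1 / 2 < u) : h u = -Real.log 2 - Real.log (1 - u) := by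
  rw [h, if_neg (not_le.mpr hu), one_div, Real.log_inv]

lemma log_one_sub_hinv_of_pos {y : ℝ} (hy : 0 < y) :
    Real.log (1 - hinv y) = -y - Real.log 2 := by
  rw [hinv_of_pos hy, sub_sub_cancel, Real.log_div (Real.exp_ne_zero _) two_ne_zero,
    Real.log_exp]

lemma h_sub_eq_neg_log_div {u y : ℝ} (hu : 1 / 2 < u) (hu1 : 1 - u ≠ 0) (hy : 0 < y) :
    h u - y = -Real.log ((1 - u) / (1 - hinv y)) := by
  have hy1 : 1 - hinv y ≠ 0 := by
    rw [hinv_of_pos hy, sub_sub_cancel]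
    positivity
  rw [Real.log_div hu1 hy1, h_of_half_lt hu, log_one_sub_hinv_of_pos hy]
  ring

lemma tendsto_hinv_atTop : Tendsto hinv atTop (𝓝[<] 1) := by
  have hlim : Tendsto (fun y : ℝ => 1 - Real.exp (-y) / 2) atTop (𝓝 1) := by
    simpa using (Real.tendsto_exp_neg_atTop_nhds_zero.div_const 2).const_sub (1 : ℝ)
  have hpos : ∀ᶠ y : ℝ in atTop, 0 < y := eventually_gt_atTop 0
  refine tendsto_nhdsWithin_iff.mpr ⟨hlim.congr' ?_, ?_⟩
  · filter_upwards [hpos] with y hy using (hinv_of_pos hy).symm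
  · filter_upwards [hpos] with y hy
    rw [Set.mem_Iio, hinv_of_pos hy]
    linarith [Real.exp_pos (-y)]

lemma tendsto_one_of_tendsto_div_one_sub {f : ℝ → ℝ} {b : ℝ}
    (hderiv : Tendsto (fun x => (1 - f x) / (1 - x)) (𝓝[<] 1) (𝓝 b)) :
    Tendsto f (𝓝[<] 1) (𝓝 1) := by
  have hsub : Tendsto (fun x : ℝ => 1 - x) (𝓝[<] 1) (𝓝 0) := by
    simpa using (tendsto_nhdsWithin_of_tendsto_nhds (tendsto_id (x := 𝓝 (1 : ℝ)))).const_sub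
      (1 : ℝ)
  have hnum : Tendsto (fun x => 1 - f x) (𝓝[<] 1) (𝓝 0) := by
    refine (mul_zero b ▸ hderiv.mul hsub).congr' ?_
    filter_upwards [self_mem_nhdsWithin] with x (hx : x < 1)
    exact div_mul_cancel₀ _ (sub_ne_zero.mpr hx.ne')
  simpa using hnum.const_sub (1 : ℝ)

theorem conjugate_limit_atTop_general (f : ℝ → ℝ) (b : ℝ)
    (hb : 0 < b)
    (hderiv : Filter.Tendsto (fun x => (1 - f x) / (1 - x))
      (nhdsWithin 1 (Set.Iio 1)) (nhds b)) :
    Filter.Tendsto (fun x => h (f (hinv x)) - x) Filter.atTop (nhds (-Real.log b)) := by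
  have hratio := hderiv.comp tendsto_hinv_atTop
  have hf1 := (tendsto_one_of_tendsto_div_one_sub hderiv).comp tendsto_hinv_atTop
  refine (((Real.continuousAt_log hb.ne').tendsto.comp hratio).neg).congr' ?_
  filter_upwards [eventually_gt_atTop 0, hf1.eventually (eventually_gt_nhds one_half_lt_one),
    hratio.eventually (eventually_ne_nhds hb.ne')] with y hy hhalf hne
  exact (h_sub_eq_neg_log_div hhalf (div_ne_zero_iff.mp hne).1 hy).symm

/-- if `f : [0,1] → [0,1]` is continuous, fixes `0` and `1`, maps `(0,1)`
into `(0,1)`, and has a finite positive left derivative `b` at `1`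
(i.e. `(1 - f(x))/(1 - x) → b` as `x → 1⁻`), then `F = h ∘ f ∘ h⁻¹` satisfies
`F(x) - x → -log b` as `x → +∞`. -/
theorem conjugate_limit_atTop (f : ℝ → ℝ) (b : ℝ)
    (hf : ContinuousOn f (Set.Icc 0 1))
    (h0 : f 0 = 0) (h1 : f 1 = 1)
    (hoo : Set.MapsTo f (Set.Ioo 0 1) (Set.Ioo 0 1))
    (hb : 0 < b)
    (hderiv : Filter.Tendsto (fun x => (1 - f x) / (1 - x))
      (nhdsWithin 1 (Set.Iio 1)) (nhds b)) :
    Filter.Tendsto (fun x => h (f (hinv x)) - x) Filter.atTop (nhds (-Real.log b)) :=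
  conjugate_limit_atTop_general f b hb hderiv
end

section
/- Let F : ℝ → ℝ be a continuous surjection such that L = lim_{x→-∞}(F(x) - x) exists and is finite. Then the map f : [0,1] → [0,1] defined by f(0)=0, f(1)=1, and f(x) = h⁻¹(F(h(x))) for x ∈ (0,1) is continuous at 0, and the limit lim_{x→0⁺} f(x)/x exists and equals e^L. -/
open Filter Topology Set

lemma h_of_le_half {x : ℝ} (hx : x ≤ 1/2) : h x = Real.log x - Real.log (1/2) := if_pos hx

lemma exp_h_of_le_half {x : ℝ} (hx0 : 0 < x) (hx : x ≤ 1/2) : Real.exp (h x) = 2 * x := by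
  rw [h_of_le_half hx, Real.exp_sub, Real.exp_log hx0, Real.exp_log (by norm_num)]
  ring

lemma hinv_div_eq_exp_sub {x y : ℝ} (hy : y ≤ 0) (hx0 : 0 < x) (hx : x ≤ 1/2) :
    hinv y / x = Real.exp (y - h x) := by
  rw [hinv_of_nonpos hy, Real.exp_sub, exp_h_of_le_half hx0 hx]
  field_simp

lemma eventually_mem_Ioc_half : ∀ᶠ x in 𝓝[>] (0 : ℝ), x ∈ Ioc 0 (1/2) :=
  Ioc_mem_nhdsGT (by norm_num)

lemma tendsto_h_nhdsGT_zero : Tendsto h (𝓝[>] 0) atBot := by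
  refine (tendsto_atBot_add_const_right _ (-Real.log (1/2))
    Real.tendsto_log_nhdsGT_zero).congr' ?_
  filter_upwards [eventually_mem_Ioc_half] with x hx
  rw [h_of_le_half hx.2, sub_eq_add_neg]

lemma tendsto_atBot_of_tendsto_sub_id {G : ℝ → ℝ} {L : ℝ}
    (hL : Tendsto (fun y => G y - y) atBot (𝓝 L)) : Tendsto G atBot atBot := by
  simpa using hL.add_atBot tendsto_id

lemma tendsto_hinv_comp_h_div {G : ℝ → ℝ} {L : ℝ}
    (hL : Tendsto (fun y => G y - y) atBot (𝓝 L)) :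
    Tendsto (fun x => hinv (G (h x)) / x) (𝓝[>] 0) (𝓝 (Real.exp L)) := by
  have hGh_nonpos : ∀ᶠ x in 𝓝[>] (0 : ℝ), G (h x) ≤ 0 :=
    ((tendsto_atBot_of_tendsto_sub_id hL).comp tendsto_h_nhdsGT_zero).eventually_le_atBot 0
  refine ((Real.continuous_exp.tendsto L).comp (hL.comp tendsto_h_nhdsGT_zero)).congr' ?_
  filter_upwards [eventually_mem_Ioc_half, hGh_nonpos] with x hx hGx
  exact (hinv_div_eq_exp_sub hGx hx.1 hx.2).symm

lemma continuousWithinAt_Ici_of_tendsto_div {f : ℝ → ℝ} {c : ℝ} (hf0 : f 0 = 0)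
    (hf : Tendsto (fun x => f x / x) (𝓝[>] 0) (𝓝 c)) : ContinuousWithinAt f (Ici 0) 0 := by
  rw [← continuousWithinAt_Ioi_iff_Ici, ContinuousWithinAt, hf0]
  have hmul := hf.mul (tendsto_nhdsWithin_of_tendsto_nhds tendsto_id)
  rw [mul_zero] at hmul
  refine hmul.congr' ?_
  filter_upwards [self_mem_nhdsWithin] with x hx
  exact div_mul_cancel₀ (f x) (ne_of_gt hx)

theorem transfer_back_derivative_general (F : ℝ → ℝ) (L : ℝ)
    (hL : Filter.Tendsto (fun x => F x - x) Filter.atBot (nhds L))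
    (f : ℝ → ℝ)
    (hfdef : ∀ x, f x = if x = 0 then 0 else if x = 1 then 1 else hinv (F (h x))) :
    ContinuousWithinAt f (Set.Icc 0 1) 0 ∧
      Filter.Tendsto (fun x => f x / x) (nhdsWithin 0 (Set.Ioi 0))
        (nhds (Real.exp L)) := by
  have hdiv : Tendsto (fun x => f x / x) (𝓝[>] 0) (𝓝 (Real.exp L)) := by
    refine (tendsto_hinv_comp_h_div hL).congr' ?_
    filter_upwards [eventually_mem_Ioc_half] with x hx
    rw [hfdef, if_neg hx.1.ne', if_neg (by linarith [hx.2])]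
  have hf0 : f 0 = 0 := by simp [hfdef]
  exact ⟨(continuousWithinAt_Ici_of_tendsto_div hf0 hdiv).mono Icc_subset_Ici_self, hdiv⟩

/-- if `F : ℝ → ℝ` is a continuous surjection with
`F(x) - x → L` (finite) as `x → -∞`, then the map `f` defined by `f 0 = 0`, `f 1 = 1`
and `f = h⁻¹ ∘ F ∘ h` on `(0,1)` is continuous at `0` (within `[0,1]`) and
`f(x)/x → e^L` as `x → 0⁺`. -/
theorem transfer_back_derivative (F : ℝ → ℝ) (L : ℝ)
    (hF : Continuous F) (hsurj : Function.Surjective F)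
    (hL : Filter.Tendsto (fun x => F x - x) Filter.atBot (nhds L))
    (f : ℝ → ℝ)
    (hfdef : ∀ x, f x = if x = 0 then 0 else if x = 1 then 1 else hinv (F (h x))) :
    ContinuousWithinAt f (Set.Icc 0 1) 0 ∧
      Filter.Tendsto (fun x => f x / x) (nhdsWithin 0 (Set.Ioi 0))
        (nhds (Real.exp L)) :=
  transfer_back_derivative_general F L hL f hfdef
end

section
/- Given two Cantor sets C₁, C₂ ⊂ ℝ (nonempty, compact, totally disconnected, perfect) with m_i = min C_i and M_i = max C_i, there exists an order-preserving homeomorphism f : [m₁, M₁] → [m₂, M₂] with f(C₁) = C₂. -/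
/-!
When `C ⊆ ℝ` is a Cantor set, its gaps (the bounded open intervals complementary to `C`, whose
endpoints lie in `C`), ordered by position, form a countable dense linear order without
endpoints: density and the absence of endpoints come from `C` being perfect and totally
disconnected. By Cantor's back-and-forth theorem the gap orders of `C₁` and `C₂` are isomorphic,
say by `ψ`. A point `x ∈ C₁` is determined by the gaps to its left, so it is sent to the supremum
of the right endpoints of their `ψ`-images, and each gap `g` is mapped affinely onto `ψ g`. This
is a strictly increasing surjection `[m₁, M₁] → [m₂, M₂]`, hence it is continuous.
-/

open Set

theorem MonotoneOn.continuousOn_of_image_Icc {α β : Type*} [LinearOrder α] [TopologicalSpace α]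
    [OrderTopology α] [LinearOrder β] [TopologicalSpace β] [OrderTopology β] [DenselyOrdered β]
    {f : α → β} {a b : α} {c d : β} (hf : MonotoneOn f (Icc a b))
    (himg : f '' Icc a b = Icc c d) : ContinuousOn f (Icc a b) := by
  have hmaps : MapsTo f (Icc a b) (Icc c d) := himg ▸ mapsTo_image f _
  have hsurj : Function.Surjective hmaps.restrict := by
    rintro ⟨y, hy⟩
    obtain ⟨x, hx, rfl⟩ := himg.symm ▸ hy
    exact ⟨⟨x, hx⟩, rfl⟩
  have hmono : Monotone hmaps.restrict := fun x y h ↦ hf x.2 y.2 h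
  exact continuousOn_iff_continuous_domRestrict.2
    (continuous_subtype_val.comp (hmono.continuous_of_surjective hsurj))

noncomputable def intervalAffine (a b a' b' x : ℝ) : ℝ := a' + (b' - a') / (b - a) * (x - a)

section IntervalAffine

variable {a b a' b' : ℝ}

theorem intervalAffine_strictMono (hab : a < b) (hab' : a' < b') :
    StrictMono (intervalAffine a b a' b') := by
  intro x y hxy
  have : 0 < (b' - a') / (b - a) := div_pos (sub_pos.2 hab') (sub_pos.2 hab)
  unfold intervalAffine
  gcongr

theorem intervalAffine_mapsTo (hab : a < b) (hab' : a' < b') :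
    MapsTo (intervalAffine a b a' b') (Ioo a b) (Ioo a' b') := by
  have hleft : intervalAffine a b a' b' a = a' := by simp [intervalAffine]
  have hright : intervalAffine a b a' b' b = b' := by
    simp [intervalAffine, div_mul_cancel₀ _ (sub_ne_zero.2 hab.ne')]
  intro x hx
  exact ⟨hleft.symm.trans_lt (intervalAffine_strictMono hab hab' hx.1),
    (intervalAffine_strictMono hab hab' hx.2).trans_eq hright⟩

theorem intervalAffine_intervalAffine (hab : a < b) (hab' : a' < b') (y : ℝ) :
    intervalAffine a b a' b' (intervalAffine a' b' a b y) = y := by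
  have := sub_ne_zero.2 hab.ne'
  have := sub_ne_zero.2 hab'.ne'
  unfold intervalAffine
  field_simp
  ring

end IntervalAffine

structure Gap (C : Set ℝ) where
  left : ℝ
  right : ℝ
  left_mem : left ∈ C
  right_mem : right ∈ C
  left_lt_right : left < right
  notMem_of_mem_Ioo : ∀ ⦃x⦄, x ∈ Ioo left right → x ∉ C

variable {C D : Set ℝ}

namespace Gap

theorem left_injective : Function.Injective (left : Gap C → ℝ) := by
  rintro ⟨a, b, ha, hb, hab, hC⟩ ⟨a', b', ha', hb', hab', hC'⟩ (rfl : a = a')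
  obtain rfl : b = b' := by
    by_contra hne
    rcases lt_or_gt_of_ne hne with hlt | hlt
    · exact hC' ⟨hab, hlt⟩ hb
    · exact hC ⟨hab', hlt⟩ hb'
  rfl

noncomputable instance : LinearOrder (Gap C) := LinearOrder.lift' left left_injective

theorem le_left_or_right_le (g : Gap C) {x : ℝ} (hx : x ∈ C) : x ≤ g.left ∨ g.right ≤ x := by
  by_contra! h
  exact g.notMem_of_mem_Ioo ⟨h.1, h.2⟩ hx

theorem right_le_left_of_lt {g g' : Gap C} (h : g < g') : g.right ≤ g'.left :=
  (g.le_left_or_right_le g'.left_mem).resolve_left (not_le.2 h)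

theorem Ioo_subset_Icc (hc : IsCompact C) (g : Gap C) :
    Ioo g.left g.right ⊆ Icc (sInf C) (sSup C) :=
  have hC := subset_Icc_csInf_csSup hc.bddBelow hc.bddAbove
  Ioo_subset_Icc_self.trans (ordConnected_Icc.out (hC g.left_mem) (hC g.right_mem))

theorem eq_of_mem_Ioo {g g' : Gap C} {x : ℝ} (hx : x ∈ Ioo g.left g.right)
    (hx' : x ∈ Ioo g'.left g'.right) : g = g' := by
  by_contra hne
  rcases lt_or_gt_of_ne hne with hlt | hlt
  · exact (hx.2.trans_le ((right_le_left_of_lt hlt).trans hx'.1.le)).false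
  · exact (hx'.2.trans_le ((right_le_left_of_lt hlt).trans hx.1.le)).false

instance : Countable (Gap C) := by
  choose q hq using fun g : Gap C ↦ exists_rat_btwn g.left_lt_right
  have hq_inj : Function.Injective q := fun g g' h ↦ eq_of_mem_Ioo (hq g) (h ▸ hq g')
  exact hq_inj.countable

theorem exists_mem_Ioo_left (hp : Perfect C) (g : Gap C) {u : ℝ} (hu : u < g.left) :
    ∃ y ∈ C, y ∈ Ioo u g.left := by
  obtain ⟨y, ⟨hyI, hyC⟩, hy⟩ :=
    preperfect_iff_nhds.1 hp.acc _ g.left_mem _ (Ioo_mem_nhds hu g.left_lt_right)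
  refine ⟨y, hyC, hyI.1, lt_of_le_of_ne (le_of_not_gt fun h ↦ ?_) hy⟩
  exact g.notMem_of_mem_Ioo ⟨h, hyI.2⟩ hyC

theorem exists_mem_Ioo_right (hp : Perfect C) (g : Gap C) {v : ℝ} (hv : g.right < v) :
    ∃ y ∈ C, y ∈ Ioo g.right v := by
  obtain ⟨y, ⟨hyI, hyC⟩, hy⟩ :=
    preperfect_iff_nhds.1 hp.acc _ g.right_mem _ (Ioo_mem_nhds g.left_lt_right hv)
  refine ⟨y, hyC, lt_of_le_of_ne (le_of_not_gt fun h ↦ ?_) hy.symm, hyI.2⟩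
  exact g.notMem_of_mem_Ioo ⟨hyI.1, h⟩ hyC

theorem right_lt_left_of_lt (hp : Perfect C) {g g' : Gap C} (h : g < g') :
    g.right < g'.left := by
  refine lt_of_le_of_ne (right_le_left_of_lt h) fun heq ↦ ?_
  obtain ⟨y, hyC, hy⟩ := exists_mem_Ioo_right hp g (heq ▸ g'.left_lt_right)
  exact g'.notMem_of_mem_Ioo (heq ▸ hy) hyC

end Gap

theorem exists_gap_mem_Ioo (hC : IsClosed C) {u v x : ℝ} (hu : u ∈ C) (hv : v ∈ C)
    (hux : u < x) (hxv : x < v) (hx : x ∉ C) :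
    ∃ g : Gap C, u ≤ g.left ∧ g.right ≤ v ∧ x ∈ Ioo g.left g.right := by
  have hL : IsCompact (C ∩ Icc u x) := isCompact_Icc.inter_left hC
  have hR : IsCompact (C ∩ Icc x v) := isCompact_Icc.inter_left hC
  obtain ⟨⟨haC, hua, hax⟩, hbC, hxb, hbv⟩ :
      sSup (C ∩ Icc u x) ∈ C ∩ Icc u x ∧ sInf (C ∩ Icc x v) ∈ C ∩ Icc x v :=
    ⟨hL.sSup_mem ⟨u, hu, le_rfl, hux.le⟩, hR.sInf_mem ⟨v, hv, hxv.le, le_rfl⟩⟩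
  have hax : sSup (C ∩ Icc u x) < x := lt_of_le_of_ne hax fun h ↦ hx (h ▸ haC)
  have hxb : x < sInf (C ∩ Icc x v) := lt_of_le_of_ne hxb fun h ↦ hx (h ▸ hbC)
  refine ⟨⟨_, _, haC, hbC, hax.trans hxb, fun y hy hyC ↦ ?_⟩, hua, hbv, hax, hxb⟩
  rcases le_or_gt y x with hyx | hxy
  · exact hy.1.not_ge (le_csSup hL.bddAbove ⟨hyC, hua.trans hy.1.le, hyx⟩)
  · exact hy.2.not_ge (csInf_le hR.bddBelow ⟨hyC, hxy.le, hy.2.le.trans hbv⟩)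

theorem exists_gap_between (hC : IsClosed C) (ht : IsTotallyDisconnected C) {u v : ℝ}
    (hu : u ∈ C) (hv : v ∈ C) (huv : u < v) : ∃ g : Gap C, u ≤ g.left ∧ g.right ≤ v := by
  obtain ⟨x, hx, hxC⟩ : ∃ x ∈ Ioo u v, x ∉ C := by
    by_contra! hsub
    have hIcc : Icc u v ⊆ C := by
      rw [← Ico_insert_right huv.le, ← Ioo_insert_left huv]
      exact insert_subset hv (insert_subset hu hsub)
    exact huv.ne (ht _ hIcc isPreconnected_Icc (left_mem_Icc.2 huv.le) (right_mem_Icc.2 huv.le))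
  obtain ⟨g, hug, hgv, -⟩ := exists_gap_mem_Ioo hC hu hv hx.1 hx.2 hxC
  exact ⟨g, hug, hgv⟩

theorem exists_gap_mem_Ioo_of_mem_Icc (hc : IsCompact C) (hne : C.Nonempty) {x : ℝ}
    (hx : x ∈ Icc (sInf C) (sSup C)) (hxC : x ∉ C) : ∃ g : Gap C, x ∈ Ioo g.left g.right := by
  have hm := hc.sInf_mem hne
  have hM := hc.sSup_mem hne
  obtain ⟨g, -, -, hg⟩ := exists_gap_mem_Ioo hc.isClosed hm hM
    (lt_of_le_of_ne hx.1 fun h ↦ hxC (h ▸ hm)) (lt_of_le_of_ne hx.2 fun h ↦ hxC (h ▸ hM)) hxC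
  exact ⟨g, hg⟩

namespace Gap

variable (hp : Perfect C) (ht : IsTotallyDisconnected C)
include hp ht

theorem denselyOrdered : DenselyOrdered (Gap C) where
  dense g g' h := by
    obtain ⟨g₀, hg, hg'⟩ := exists_gap_between hp.closed ht g.right_mem g'.left_mem
      (right_lt_left_of_lt hp h)
    exact ⟨g₀, g.left_lt_right.trans_le hg, g₀.left_lt_right.trans_le hg'⟩

theorem noMinOrder : NoMinOrder (Gap C) where
  exists_lt g := by
    obtain ⟨y, hyC, hy⟩ := exists_mem_Ioo_left hp g (sub_one_lt g.left)
    obtain ⟨g₀, -, hg₀⟩ := exists_gap_between hp.closed ht hyC g.left_mem hy.2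
    exact ⟨g₀, g₀.left_lt_right.trans_le hg₀⟩

theorem noMaxOrder : NoMaxOrder (Gap C) where
  exists_gt g := by
    obtain ⟨y, hyC, hy⟩ := exists_mem_Ioo_right hp g (lt_add_one g.right)
    obtain ⟨g₀, hg₀, -⟩ := exists_gap_between hp.closed ht g.right_mem hyC hy.1
    exact ⟨g₀, g.left_lt_right.trans_le hg₀⟩

theorem nonempty (hne : C.Nonempty) : Nonempty (Gap C) := by
  obtain ⟨x, hx⟩ := hne
  obtain ⟨y, ⟨-, hy⟩, hyx⟩ := preperfect_iff_nhds.1 hp.acc x hx univ Filter.univ_mem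
  rcases lt_or_gt_of_ne hyx with hlt | hlt
  · obtain ⟨g, -⟩ := exists_gap_between hp.closed ht hy hx hlt
    exact ⟨g⟩
  · obtain ⟨g, -⟩ := exists_gap_between hp.closed ht hx hy hlt
    exact ⟨g⟩

end Gap

theorem nonempty_gap_orderIso (hne : C.Nonempty) (hp : Perfect C)
    (ht : IsTotallyDisconnected C) (hne' : D.Nonempty) (hp' : Perfect D)
    (ht' : IsTotallyDisconnected D) : Nonempty (Gap C ≃o Gap D) := by
  have := Gap.denselyOrdered hp ht
  have := Gap.noMinOrder hp ht
  have := Gap.noMaxOrder hp ht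
  have := Gap.nonempty hp ht hne
  have := Gap.denselyOrdered hp' ht'
  have := Gap.noMinOrder hp' ht'
  have := Gap.noMaxOrder hp' ht'
  have := Gap.nonempty hp' ht' hne'
  exact Order.iso_of_countable_dense _ _

section GapMap

/- `sInf D` keeps the set nonempty; it is the value of `gapMap` at a point of `C` lying left of
every gap. -/
noncomputable def rightSup (S : Set (Gap D)) : ℝ :=
  sSup (insert (sInf D) (Gap.right '' S))

theorem rightSup_mem (hc : IsCompact D) (hne : D.Nonempty) (S : Set (Gap D)) :
    rightSup S ∈ D := by
  have hsub : insert (sInf D) (Gap.right '' S) ⊆ D :=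
    insert_subset (hc.sInf_mem hne) (image_subset_iff.2 fun g _ ↦ g.right_mem)
  exact closure_minimal hsub hc.isClosed
    (csSup_mem_closure (insert_nonempty _ _) (hc.bddAbove.mono hsub))

theorem le_rightSup (hc : IsCompact D) {S : Set (Gap D)} {g : Gap D} (hg : g ∈ S) :
    g.right ≤ rightSup S := by
  refine le_csSup (BddAbove.insert _ (hc.bddAbove.mono ?_)) (mem_insert_of_mem _ ⟨g, hg, rfl⟩)
  exact image_subset_iff.2 fun g _ ↦ g.right_mem

theorem rightSup_le {S : Set (Gap D)} {y : ℝ} (h₀ : sInf D ≤ y) (h : ∀ g ∈ S, g.right ≤ y) :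
    rightSup S ≤ y :=
  csSup_le (insert_nonempty _ _) (forall_mem_insert.2 ⟨h₀, forall_mem_image.2 h⟩)

theorem rightSup_setOf_right_le (hc : IsCompact D) (ht : IsTotallyDisconnected D) {y : ℝ}
    (hy : y ∈ D) : rightSup {g : Gap D | g.right ≤ y} = y := by
  refine le_antisymm (rightSup_le (csInf_le hc.bddBelow hy) fun g hg ↦ hg) (not_lt.1 fun hlt ↦ ?_)
  obtain ⟨g, hg, hgy⟩ :=
    exists_gap_between hc.isClosed ht (rightSup_mem hc ⟨y, hy⟩ _) hy hlt
  exact (hg.trans_lt g.left_lt_right).not_ge (le_rightSup hc hgy)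

noncomputable def gapMap (ψ : Gap C ≃o Gap D) (x : ℝ) : ℝ :=
  rightSup (ψ '' {g | g.right ≤ x})

variable (ψ : Gap C ≃o Gap D)

theorem gapMap_mem (hc : IsCompact D) (hne : D.Nonempty) (x : ℝ) : gapMap ψ x ∈ D :=
  rightSup_mem hc hne _

theorem right_le_gapMap (hc : IsCompact D) {g : Gap C} {x : ℝ} (h : g.right ≤ x) :
    (ψ g).right ≤ gapMap ψ x :=
  le_rightSup hc (mem_image_of_mem ψ h)

theorem gapMap_le_left (hc : IsCompact D) {g : Gap C} {x : ℝ} (h : x ≤ g.left) :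
    gapMap ψ x ≤ (ψ g).left := by
  refine rightSup_le (csInf_le hc.bddBelow (ψ g).left_mem) (forall_mem_image.2 fun g' hg' ↦ ?_)
  exact Gap.right_le_left_of_lt (ψ.lt_iff_lt.2 (g'.left_lt_right.trans_le (hg'.trans h)))

theorem right_le_gapMap_iff (hc : IsCompact D) {g : Gap C} {x : ℝ} (hx : x ∈ C) :
    (ψ g).right ≤ gapMap ψ x ↔ g.right ≤ x := by
  refine ⟨fun h ↦ not_lt.1 fun hlt ↦ ?_, right_le_gapMap ψ hc⟩
  have hxg : x ≤ g.left := (g.le_left_or_right_le hx).resolve_right hlt.not_ge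
  exact (h.trans (gapMap_le_left ψ hc hxg)).not_gt (ψ g).left_lt_right

theorem gapMap_strictMonoOn (hC : IsClosed C) (ht : IsTotallyDisconnected C)
    (hc : IsCompact D) : StrictMonoOn (gapMap ψ) C := by
  intro x hx y hy hxy
  obtain ⟨g, hxg, hgy⟩ := exists_gap_between hC ht hx hy hxy
  calc gapMap ψ x ≤ (ψ g).left := gapMap_le_left ψ hc hxg
    _ < (ψ g).right := (ψ g).left_lt_right
    _ ≤ gapMap ψ y := right_le_gapMap ψ hc hgy

theorem gapMap_gapMap_symm (hcC : IsCompact C) (hcD : IsCompact D)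
    (htD : IsTotallyDisconnected D) {y : ℝ} (hy : y ∈ D) : gapMap ψ (gapMap ψ.symm y) = y := by
  have hgaps : ψ '' {g | g.right ≤ gapMap ψ.symm y} = {g | g.right ≤ y} := by
    ext g
    rw [ψ.image_eq_preimage_symm]
    exact right_le_gapMap_iff ψ.symm hcC hy
  rw [gapMap, hgaps, rightSup_setOf_right_le hcD htD hy]

end GapMap

section FillGaps

open Classical in
noncomputable def fillGaps (ψ : Gap C ≃o Gap D) (x : ℝ) : ℝ :=
  if h : ∃ g : Gap C, x ∈ Ioo g.left g.right then
    intervalAffine h.choose.left h.choose.right (ψ h.choose).left (ψ h.choose).right x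
  else gapMap ψ x

variable (ψ : Gap C ≃o Gap D)

theorem fillGaps_of_mem {x : ℝ} (hx : x ∈ C) : fillGaps ψ x = gapMap ψ x :=
  dif_neg fun ⟨g, hg⟩ ↦ g.notMem_of_mem_Ioo hg hx

theorem fillGaps_of_mem_Ioo {g : Gap C} {x : ℝ} (hx : x ∈ Ioo g.left g.right) :
    fillGaps ψ x = intervalAffine g.left g.right (ψ g).left (ψ g).right x := by
  have h : ∃ g : Gap C, x ∈ Ioo g.left g.right := ⟨g, hx⟩
  rw [fillGaps, dif_pos h, Gap.eq_of_mem_Ioo h.choose_spec hx]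

theorem fillGaps_mem_Ioo {g : Gap C} {x : ℝ} (hx : x ∈ Ioo g.left g.right) :
    fillGaps ψ x ∈ Ioo (ψ g).left (ψ g).right :=
  fillGaps_of_mem_Ioo ψ hx ▸ intervalAffine_mapsTo g.left_lt_right (ψ g).left_lt_right hx

theorem fillGaps_strictMonoOn (hcC : IsCompact C) (hneC : C.Nonempty)
    (htC : IsTotallyDisconnected C) (hcD : IsCompact D) :
    StrictMonoOn (fillGaps ψ) (Icc (sInf C) (sSup C)) := by
  intro x hx y hy hxy
  by_cases hxC : x ∈ C <;> by_cases hyC : y ∈ C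
  · rw [fillGaps_of_mem ψ hxC, fillGaps_of_mem ψ hyC]
    exact gapMap_strictMonoOn ψ hcC.isClosed htC hcD hxC hyC hxy
  · obtain ⟨g, hg⟩ := exists_gap_mem_Ioo_of_mem_Icc hcC hneC hy hyC
    have hxg : x ≤ g.left := (g.le_left_or_right_le hxC).resolve_right fun h ↦
      (h.trans_lt (hxy.trans hg.2)).false
    rw [fillGaps_of_mem ψ hxC]
    exact (gapMap_le_left ψ hcD hxg).trans_lt (fillGaps_mem_Ioo ψ hg).1
  · obtain ⟨g, hg⟩ := exists_gap_mem_Ioo_of_mem_Icc hcC hneC hx hxC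
    have hgy : g.right ≤ y := (g.le_left_or_right_le hyC).resolve_left fun h ↦
      (h.trans_lt (hg.1.trans hxy)).false
    rw [fillGaps_of_mem ψ hyC]
    exact (fillGaps_mem_Ioo ψ hg).2.trans_le (right_le_gapMap ψ hcD hgy)
  · obtain ⟨g, hg⟩ := exists_gap_mem_Ioo_of_mem_Icc hcC hneC hx hxC
    obtain ⟨g', hg'⟩ := exists_gap_mem_Ioo_of_mem_Icc hcC hneC hy hyC
    rcases lt_trichotomy g g' with hlt | rfl | hgt
    · exact (fillGaps_mem_Ioo ψ hg).2.trans_le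
        ((Gap.right_le_left_of_lt (ψ.lt_iff_lt.2 hlt)).trans (fillGaps_mem_Ioo ψ hg').1.le)
    · rw [fillGaps_of_mem_Ioo ψ hg, fillGaps_of_mem_Ioo ψ hg']
      exact intervalAffine_strictMono g.left_lt_right (ψ g).left_lt_right hxy
    · exact absurd (hg'.2.trans_le ((Gap.right_le_left_of_lt hgt).trans hg.1.le)) hxy.not_gt

theorem fillGaps_image (hcC : IsCompact C) (hneC : C.Nonempty) (hcD : IsCompact D)
    (hneD : D.Nonempty) (htD : IsTotallyDisconnected D) : fillGaps ψ '' C = D := by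
  refine Subset.antisymm ?_ fun y hy ↦ ?_
  · rintro _ ⟨x, hx, rfl⟩
    exact fillGaps_of_mem ψ hx ▸ gapMap_mem ψ hcD hneD x
  · have hx := gapMap_mem ψ.symm hcC hneC y
    exact ⟨_, hx, (fillGaps_of_mem ψ hx).trans (gapMap_gapMap_symm ψ hcC hcD htD hy)⟩

theorem fillGaps_image_Icc (hcC : IsCompact C) (hneC : C.Nonempty) (hcD : IsCompact D)
    (hneD : D.Nonempty) (htD : IsTotallyDisconnected D) :
    fillGaps ψ '' Icc (sInf C) (sSup C) = Icc (sInf D) (sSup D) := by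
  have himage := fillGaps_image ψ hcC hneC hcD hneD htD
  have hC := subset_Icc_csInf_csSup hcC.bddBelow hcC.bddAbove
  have hD := subset_Icc_csInf_csSup hcD.bddBelow hcD.bddAbove
  refine Subset.antisymm ?_ fun y hy ↦ ?_
  · rintro _ ⟨x, hx, rfl⟩
    by_cases hxC : x ∈ C
    · exact hD (himage.subset (mem_image_of_mem _ hxC))
    · obtain ⟨g, hg⟩ := exists_gap_mem_Ioo_of_mem_Icc hcC hneC hx hxC
      exact (ψ g).Ioo_subset_Icc hcD (fillGaps_mem_Ioo ψ hg)
  · by_cases hyD : y ∈ D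
    · exact image_mono hC (himage.symm ▸ hyD)
    · obtain ⟨h, hh⟩ := exists_gap_mem_Ioo_of_mem_Icc hcD hneD hy hyD
      have hx := intervalAffine_mapsTo h.left_lt_right (ψ.symm h).left_lt_right hh
      refine ⟨_, (ψ.symm h).Ioo_subset_Icc hcC hx, ?_⟩
      rw [fillGaps_of_mem_Ioo ψ hx, ψ.apply_symm_apply]
      exact intervalAffine_intervalAffine (ψ.symm h).left_lt_right h.left_lt_right y

end FillGaps

/-- given two Cantor sets `C₁, C₂ ⊂ ℝ` (nonempty, compact, perfect,
totally disconnected), with `mᵢ = min Cᵢ`, `Mᵢ = max Cᵢ`, there is an order-preserving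
homeomorphism `f : [m₁, M₁] → [m₂, M₂]` (a continuous strictly increasing surjection
of the closed intervals) with `f(C₁) = C₂`. -/
theorem cantor_order_homeomorphism (C₁ C₂ : Set ℝ)
    (hne₁ : C₁.Nonempty) (hne₂ : C₂.Nonempty)
    (hc₁ : IsCompact C₁) (hc₂ : IsCompact C₂)
    (hp₁ : Perfect C₁) (hp₂ : Perfect C₂)
    (ht₁ : IsTotallyDisconnected C₁) (ht₂ : IsTotallyDisconnected C₂) :
    ∃ f : ℝ → ℝ,
      ContinuousOn f (Set.Icc (sInf C₁) (sSup C₁)) ∧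
      StrictMonoOn f (Set.Icc (sInf C₁) (sSup C₁)) ∧
      f '' Set.Icc (sInf C₁) (sSup C₁) = Set.Icc (sInf C₂) (sSup C₂) ∧
      f '' C₁ = C₂ := by
  obtain ⟨ψ⟩ := nonempty_gap_orderIso hne₁ hp₁ ht₁ hne₂ hp₂ ht₂
  have hmono := fillGaps_strictMonoOn ψ hc₁ hne₁ ht₁ hc₂
  have himage := fillGaps_image_Icc ψ hc₁ hne₁ hc₂ hne₂ ht₂
  exact ⟨fillGaps ψ, hmono.monotoneOn.continuousOn_of_image_Icc himage, hmono, himage,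
    fillGaps_image ψ hc₁ hne₁ hc₂ hne₂ ht₂⟩
end

section
/- Let G₀, G₁ : ℝ → ℝ be increasing homeomorphisms with G₀(x) < x < G₁(x) for all x, and suppose there exist R > 0 and reals η₀ < 0 < η₁ with η₁/η₀ irrational such that G_i(x) = x + η_i for all x ≤ -R and i ∈ {0,1}. Then for every x ∈ ℝ, the orbit {G_{i_{n-1}} ∘ ⋯ ∘ G_{i_0}(x) : n ∈ ℕ, i_k ∈ {0,1}} is dense in ℝ. -/
/-!
On `(-∞, -R]` the maps are the translations by `η₀ < 0 < η₁`, and since `η₁ / η₀` is irrational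
the sums `m η₀ + n η₁` (`m n : ℕ`) are dense in `[0, ∞)`. Iterating `G₀` pushes any orbit into
`(-∞, -R]`, where these translations make the closure of the orbit contain all of `(-∞, -R]`.
This closure is `G₁`-invariant, and every point is `G₁^[N]` of a point of `(-∞, -R]` because
`G₁⁻¹` also pushes every point to `-∞`.
-/

open Set Function

theorem exists_iterate_le_of_lt_self {α : Type*} [ConditionallyCompleteLinearOrder α]
    [TopologicalSpace α] [OrderTopology α] {f : α → α} (hf : Continuous f)
    (hlt : ∀ z, f z < z) (x B : α) : ∃ k, f^[k] x ≤ B := by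
  by_contra! h
  have hanti : Antitone (f^[·] x) := antitone_nat_of_succ_le fun n => by
    rw [iterate_succ_apply']
    exact (hlt _).le
  have hlim := tendsto_atTop_ciInf hanti ⟨B, forall_mem_range.2 fun k => (h k).le⟩
  exact (hlt _).ne (isFixedPt_of_tendsto_iterate hlim hf.continuousAt)

theorem exists_nat_mul_add_nat_mul_mem_Ioo {a b : ℝ} (ha : a < 0) (hb : 0 < b)
    (hirr : Irrational (a / b)) {c d : ℝ} (hc : 0 ≤ c) (hcd : c < d) :
    ∃ m n : ℕ, m * a + n * b ∈ Ioo c d := by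
  have : Fact (0 < b) := ⟨hb⟩
  -- natural multiples of `a` are dense in the compact group `ℝ ⧸ bℤ`, as integer multiples are
  have hdense : Dense (((↑) : ℝ → AddCircle b) ⁻¹' range fun m : ℕ => m • (a : AddCircle b)) :=
    QuotientAddGroup.dense_preimage_mk.2 <|
      denseRange_zsmul_iff_nsmul.1 (AddCircle.denseRange_zsmul_coe_iff.2 hirr)
  obtain ⟨t, ⟨m, hm⟩, hct, htd⟩ := hdense.exists_between hcd
  obtain ⟨k, hk⟩ : ∃ k : ℤ, k • b = t - m * a := (AddCircle.coe_eq_zero_iff b).1 <| by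
    rw [AddCircle.coe_sub, ← hm, ← nsmul_eq_mul, AddCircle.coe_nsmul, sub_self]
  have hk : t = m * a + k * b := by rw [← zsmul_eq_mul, hk]; ring
  have hk_pos : 0 < k := by
    have : 0 < (k : ℝ) * b := by nlinarith [mul_nonpos_of_nonneg_of_nonpos m.cast_nonneg ha.le]
    exact_mod_cast (pos_of_mul_pos_left this hb.le)
  lift k to ℕ using hk_pos.le
  refine ⟨m, k, ?_⟩
  push_cast at hk
  exact hk ▸ ⟨hct, htd⟩

theorem add_nat_mul_mem_of_mapsTo {f : ℝ → ℝ} {O : Set ℝ} {b η : ℝ}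
    (hf : ∀ z ≤ b, f z = z + η) (hO : MapsTo f O O) {a : ℝ} (ha : a ∈ O) :
    ∀ n : ℕ, (∀ k < n, a + k * η ≤ b) → a + n * η ∈ O
  | 0, _ => by simpa
  | n + 1, hn => by
    have := hO (add_nat_mul_mem_of_mapsTo hf hO ha n fun k hk => hn k (hk.trans n.lt_succ_self))
    rw [hf _ (hn n n.lt_succ_self)] at this
    convert this using 1
    push_cast
    ring

theorem mapsTo_setOf_exists_eq_foldl {α β : Type*} (f : α → β → α) (x : α) (b : β) :
    MapsTo (f · b) {y | ∃ l : List β, y = l.foldl f x} {y | ∃ l : List β, y = l.foldl f x} := by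
  rintro _ ⟨l, rfl⟩
  exact ⟨l ++ [b], by simp⟩

section Minimality

variable {G₀ G₁ : ℝ → ℝ} {R η₀ η₁ : ℝ} {O : Set ℝ}

theorem add_mul_add_mul_mem_of_mapsTo (hη₀ : η₀ ≤ 0) (hη₁ : 0 ≤ η₁)
    (ht₀ : ∀ z ≤ -R, G₀ z = z + η₀) (ht₁ : ∀ z ≤ -R, G₁ z = z + η₁)
    (h₀ : MapsTo G₀ O O) (h₁ : MapsTo G₁ O O) {a : ℝ} (ha : a ∈ O) (haR : a ≤ -R)
    (m n : ℕ) (h : a + m * η₀ + n * η₁ ≤ -R + η₁) : a + m * η₀ + n * η₁ ∈ O := by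
  -- translate by `η₀` first: then all intermediate points stay in `(-∞, -R]`
  have hdown : a + m * η₀ ∈ O :=
    add_nat_mul_mem_of_mapsTo ht₀ h₀ ha m fun k _ => by nlinarith [k.cast_nonneg (α := ℝ)]
  refine add_nat_mul_mem_of_mapsTo ht₁ h₁ hdown n fun k hk => ?_
  have : (k : ℝ) + 1 ≤ n := by exact_mod_cast hk
  nlinarith

theorem Iic_subset_closure_of_mapsTo (hc₀ : Continuous G₀) (hbelow : ∀ z, G₀ z < z)
    (hη₀ : η₀ < 0) (hη₁ : 0 < η₁) (hirr : Irrational (η₀ / η₁))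
    (ht₀ : ∀ z ≤ -R, G₀ z = z + η₀) (ht₁ : ∀ z ≤ -R, G₁ z = z + η₁)
    (hO : O.Nonempty) (h₀ : MapsTo G₀ O O) (h₁ : MapsTo G₁ O O) : Iic (-R) ⊆ closure O := by
  obtain ⟨x, hx⟩ := hO
  intro y (hy : y ≤ -R)
  rw [Real.mem_closure_iff]
  intro ε hε
  obtain ⟨δ, hδ, hδε, hδη⟩ : ∃ δ > 0, δ ≤ ε ∧ δ ≤ η₁ :=
    ⟨min ε η₁, lt_min hε hη₁, min_le_left _ _, min_le_right _ _⟩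
  obtain ⟨K, hK⟩ := exists_iterate_le_of_lt_self hc₀ hbelow x (min (y - δ) (-R))
  obtain ⟨m, n, hlo, hhi⟩ := exists_nat_mul_add_nat_mul_mem_Ioo hη₀ hη₁ hirr
    (c := y - δ - G₀^[K] x) (d := y + δ - G₀^[K] x) (by linarith [min_le_left (y - δ) (-R)])
    (by linarith)
  refine ⟨_, add_mul_add_mul_mem_of_mapsTo hη₀.le hη₁.le ht₀ ht₁ h₀ h₁ (h₀.iterate K hx)
    (hK.trans (min_le_right _ _)) m n (by linarith),
    abs_lt.2 ⟨by linarith, by linarith⟩⟩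

theorem dense_of_mapsTo (hm₀ : StrictMono G₀) (hm₁ : StrictMono G₁)
    (hs₀ : Surjective G₀) (hs₁ : Surjective G₁)
    (hbelow : ∀ z, G₀ z < z) (habove : ∀ z, z < G₁ z)
    (hη₀ : η₀ < 0) (hη₁ : 0 < η₁) (hirr : Irrational (η₀ / η₁))
    (ht₀ : ∀ z ≤ -R, G₀ z = z + η₀) (ht₁ : ∀ z ≤ -R, G₁ z = z + η₁)
    (hO : O.Nonempty) (h₀ : MapsTo G₀ O O) (h₁ : MapsTo G₁ O O) : Dense O := by
  have hlow := Iic_subset_closure_of_mapsTo (hm₀.monotone.continuous_of_surjective hs₀) hbelow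
    hη₀ hη₁ hirr ht₀ ht₁ hO h₀ h₁
  let e₁ := hm₁.orderIsoOfSurjective G₁ hs₁
  have he₁ : ⇑e₁ = G₁ := hm₁.coe_orderIsoOfSurjective G₁ hs₁
  have hsymm_lt (z : ℝ) : e₁.symm z < z := by
    conv_rhs => rw [← e₁.apply_symm_apply z, he₁]
    exact habove _
  intro y
  obtain ⟨N, hN⟩ := exists_iterate_le_of_lt_self e₁.symm.continuous hsymm_lt y (-R)
  have := (h₁.closure (hm₁.monotone.continuous_of_surjective hs₁)).iterate N (hlow hN)
  rwa [← he₁, LeftInverse.iterate e₁.apply_symm_apply N] at this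

end Minimality

theorem orbit_dense_general (G₀ G₁ : ℝ → ℝ)
    (hm₀ : StrictMono G₀) (hm₁ : StrictMono G₁)
    (hs₀ : Function.Surjective G₀) (hs₁ : Function.Surjective G₁)
    (hbelow : ∀ x : ℝ, G₀ x < x) (habove : ∀ x : ℝ, x < G₁ x)
    (R : ℝ) (η₀ η₁ : ℝ) (hη₀ : η₀ < 0) (hη₁ : 0 < η₁)
    (hirr : Irrational (η₁ / η₀))
    (ht₀ : ∀ x ≤ -R, G₀ x = x + η₀) (ht₁ : ∀ x ≤ -R, G₁ x = x + η₁)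
    (x : ℝ) :
    Dense {y : ℝ | ∃ l : List Bool,
      y = l.foldl (fun z b => if b then G₁ z else G₀ z) x} := by
  refine dense_of_mapsTo hm₀ hm₁ hs₀ hs₁ hbelow habove hη₀ hη₁ ?_ ht₀ ht₁ ⟨x, [], rfl⟩
    (mapsTo_setOf_exists_eq_foldl _ x false)
    (mapsTo_setOf_exists_eq_foldl _ x true)
  simpa [inv_div] using hirr.inv

/-- if `G₀, G₁ : ℝ → ℝ` are increasing homeomorphisms with
`G₀(x) < x < G₁(x)` everywhere, which are the translations by `η₀ < 0 < η₁`
(with `η₁/η₀` irrational) on `(-∞, -R]`, then every orbit of the random dynamical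
system generated by `G₀, G₁` is dense in `ℝ`. -/
theorem orbit_dense (G₀ G₁ : ℝ → ℝ)
    (hm₀ : StrictMono G₀) (hm₁ : StrictMono G₁)
    (hs₀ : Function.Surjective G₀) (hs₁ : Function.Surjective G₁)
    (hbelow : ∀ x : ℝ, G₀ x < x) (habove : ∀ x : ℝ, x < G₁ x)
    (R : ℝ) (hR : 0 < R) (η₀ η₁ : ℝ) (hη₀ : η₀ < 0) (hη₁ : 0 < η₁)
    (hirr : Irrational (η₁ / η₀))
    (ht₀ : ∀ x ≤ -R, G₀ x = x + η₀) (ht₁ : ∀ x ≤ -R, G₁ x = x + η₁)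
    (x : ℝ) :
    Dense {y : ℝ | ∃ l : List Bool,
      y = l.foldl (fun z b => if b then G₁ z else G₀ z) x} :=
  orbit_dense_general G₀ G₁ hm₀ hm₁ hs₀ hs₁ hbelow habove R η₀ η₁ hη₀ hη₁ hirr ht₀ ht₁ x
end

section
/- Let λ₀, λ₁ > 0, p ∈ (0,1), α ∈ (0,1), M > 0 and x₀ ∈ (0,1) satisfy p·λ₀^{-α} + (1-p)·λ₁^{-α} ≤ 1 and M·x₀^α ≥ 1. Let g₀, g₁ : [0,1] → [0,1] be increasing homeomorphisms with g_i⁻¹(x) < x/λ_i for all x ∈ (0,x₀), i ∈ {0,1}. If μ is a Borel probability measure on (0,1) with μ((0,x)) ≤ M·x^α for all x ∈ (0,1), then the measure Pμ defined by (Pμ)(A) = p·μ(g₀⁻¹(A)) + (1-p)·μ(g₁⁻¹(A)) also satisfies (Pμ)((0,x)) ≤ M·x^α for all x ∈ (0,1). -/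
open MeasureTheory
open scoped ENNReal

/-! Below `x₀` each preimage `gᵢ⁻¹(0,x)` lies in `(0, x/λᵢ)`, so `(Pμ)(0,x)` is at most
`M x^α (p λ₀^{-α} + (1-p) λ₁^{-α}) ≤ M x^α`; here the bound `μ(0,t) ≤ M t^α` is also needed for
`t ≥ 1`, where it holds because `M ≥ 1`. Above `x₀` the bound `M x^α ≥ M x₀^α ≥ 1` is trivial
for a probability measure. -/

lemma one_le_of_one_le_mul_rpow {M α x₀ : ℝ} (hα : 0 ≤ α) (hx₀ : x₀ ∈ Set.Icc (0:ℝ) 1)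
    (hMx : 1 ≤ M * x₀ ^ α) : 1 ≤ M := by
  have hM : 0 < M := pos_of_mul_pos_left (one_pos.trans_le hMx) (Real.rpow_nonneg hx₀.1 α)
  calc 1 ≤ M * x₀ ^ α := hMx
    _ ≤ M * 1 := by gcongr; exact Real.rpow_le_one hx₀.1 hx₀.2 hα
    _ = M := mul_one M

lemma mul_div_rpow_add_one_sub_mul_div_rpow_le {p α l₀ l₁ x : ℝ} (hl₀ : 0 ≤ l₀) (hl₁ : 0 ≤ l₁)
    (hx : 0 ≤ x)
    (hsum : p * l₀ ^ (-α) + (1 - p) * l₁ ^ (-α) ≤ 1) :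
    p * (x / l₀) ^ α + (1 - p) * (x / l₁) ^ α ≤ x ^ α :=
  calc p * (x / l₀) ^ α + (1 - p) * (x / l₁) ^ α
      = x ^ α * (p * l₀ ^ (-α) + (1 - p) * l₁ ^ (-α)) := by
        rw [Real.div_rpow hx hl₀, Real.div_rpow hx hl₁, Real.rpow_neg hl₀, Real.rpow_neg hl₁]
        ring
    _ ≤ x ^ α * 1 := by gcongr
    _ = x ^ α := mul_one _

lemma setOf_pos_lt_subset_setOf_lt_div {g : ℝ → ℝ} {l x x₀ : ℝ} (hl : 0 < l) (hx : x ≤ x₀)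
    (hinv : ∀ x ∈ Set.Ioo 0 x₀, ∀ y ∈ Set.Icc (0:ℝ) 1, g y = x → y < x / l) :
    {y : Set.Ioo (0:ℝ) 1 | 0 < g y ∧ g y < x} ⊆ {y | (y:ℝ) < x / l} := by
  rintro y ⟨hgy_pos, hgy_lt⟩
  calc (y:ℝ) < g y / l :=
        hinv (g y) ⟨hgy_pos, hgy_lt.trans_le hx⟩ y ⟨y.2.1.le, y.2.2.le⟩ rfl
    _ ≤ x / l := by gcongr

lemma ofReal_mul_add_ofReal_one_sub_mul_ofReal {p a b : ℝ} (hp : p ∈ Set.Icc (0:ℝ) 1)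
    (ha : 0 ≤ a) (hb : 0 ≤ b) :
    ENNReal.ofReal p * ENNReal.ofReal a + ENNReal.ofReal (1 - p) * ENNReal.ofReal b
      = ENNReal.ofReal (p * a + (1 - p) * b) := by
  rw [← ENNReal.ofReal_mul hp.1, ← ENNReal.ofReal_mul (sub_nonneg.2 hp.2),
    ← ENNReal.ofReal_add (mul_nonneg hp.1 ha) (mul_nonneg (sub_nonneg.2 hp.2) hb)]

section ProbabilityMeasure

variable {Ω : Type*} [MeasurableSpace Ω] (μ : Measure Ω) [IsProbabilityMeasure μ]

lemma measure_setOf_lt_le_of_forall_Ioo {f : Ω → ℝ} {M α : ℝ} (hM : 1 ≤ M) (hα : 0 ≤ α)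
    (hμ : ∀ t ∈ Set.Ioo (0:ℝ) 1, μ {ω | f ω < t} ≤ ENNReal.ofReal (M * t ^ α))
    {t : ℝ} (ht : 0 < t) : μ {ω | f ω < t} ≤ ENNReal.ofReal (M * t ^ α) := by
  rcases lt_or_ge t 1 with ht1 | ht1
  · exact hμ t ⟨ht, ht1⟩
  · exact prob_le_one.trans <| ENNReal.one_le_ofReal.2 <|
      one_le_mul_of_one_le_of_one_le hM (Real.one_le_rpow ht1 hα)

lemma ofReal_mul_add_ofReal_one_sub_mul_le_one {p : ℝ} (hp : p ∈ Set.Icc (0:ℝ) 1)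
    (s t : Set Ω) : ENNReal.ofReal p * μ s + ENNReal.ofReal (1 - p) * μ t ≤ 1 :=
  calc ENNReal.ofReal p * μ s + ENNReal.ofReal (1 - p) * μ t
      ≤ ENNReal.ofReal p * 1 + ENNReal.ofReal (1 - p) * 1 := by gcongr <;> exact prob_le_one
    _ = 1 := by
      rw [mul_one, mul_one, ← ENNReal.ofReal_add hp.1 (sub_nonneg.2 hp.2)]
      simp

end ProbabilityMeasure

theorem markov_preserves_NMalpha_general (l₀ l₁ p α M x₀ : ℝ)
    (h₀ : 0 < l₀) (h₁ : 0 < l₁) (hp : p ∈ Set.Ioo (0:ℝ) 1)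
    (hα : α ∈ Set.Ioo (0:ℝ) 1) (hx₀ : x₀ ∈ Set.Ioo (0:ℝ) 1)
    (hsum : p * l₀ ^ (-α) + (1 - p) * l₁ ^ (-α) ≤ 1)
    (hMx : 1 ≤ M * x₀ ^ α)
    (g₀ g₁ : ℝ → ℝ)
    (hinv₀ : ∀ x ∈ Set.Ioo 0 x₀, ∀ y ∈ Set.Icc (0:ℝ) 1, g₀ y = x → y < x / l₀)
    (hinv₁ : ∀ x ∈ Set.Ioo 0 x₀, ∀ y ∈ Set.Icc (0:ℝ) 1, g₁ y = x → y < x / l₁)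
    (μ : Measure ↥(Set.Ioo (0:ℝ) 1)) (hμ : IsProbabilityMeasure μ)
    (hμb : ∀ x ∈ Set.Ioo (0:ℝ) 1,
      μ {y : ↥(Set.Ioo (0:ℝ) 1) | (y:ℝ) < x} ≤ ENNReal.ofReal (M * x ^ α)) :
    ∀ x ∈ Set.Ioo (0:ℝ) 1,
      ENNReal.ofReal p *
          μ {y : ↥(Set.Ioo (0:ℝ) 1) | 0 < g₀ (y:ℝ) ∧ g₀ (y:ℝ) < x}
        + ENNReal.ofReal (1 - p) *
          μ {y : ↥(Set.Ioo (0:ℝ) 1) | 0 < g₁ (y:ℝ) ∧ g₁ (y:ℝ) < x}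
        ≤ ENNReal.ofReal (M * x ^ α) := by
  rintro x ⟨hx, -⟩
  have hp' : p ∈ Set.Icc (0:ℝ) 1 := Set.Ioo_subset_Icc_self hp
  have hM : 1 ≤ M := one_le_of_one_le_mul_rpow hα.1.le (Set.Ioo_subset_Icc_self hx₀) hMx
  rcases lt_or_ge x x₀ with hxx₀ | hxx₀
  · have hμb' {t : ℝ} (ht : 0 < t) := measure_setOf_lt_le_of_forall_Ioo μ hM hα.1.le hμb ht
    have hbound {l : ℝ} (hl : 0 < l) : 0 ≤ M * (x / l) ^ α :=
      mul_nonneg (zero_le_one.trans hM) (Real.rpow_nonneg (div_pos hx hl).le α)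
    calc _ ≤ ENNReal.ofReal p * ENNReal.ofReal (M * (x / l₀) ^ α)
          + ENNReal.ofReal (1 - p) * ENNReal.ofReal (M * (x / l₁) ^ α) := by
          gcongr
          · exact (measure_mono (setOf_pos_lt_subset_setOf_lt_div h₀ hxx₀.le hinv₀)).trans
              (hμb' (div_pos hx h₀))
          · exact (measure_mono (setOf_pos_lt_subset_setOf_lt_div h₁ hxx₀.le hinv₁)).trans
              (hμb' (div_pos hx h₁))
      _ = ENNReal.ofReal (p * (M * (x / l₀) ^ α) + (1 - p) * (M * (x / l₁) ^ α)) :=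
          ofReal_mul_add_ofReal_one_sub_mul_ofReal hp' (hbound h₀) (hbound h₁)
      _ ≤ ENNReal.ofReal (M * x ^ α) := ENNReal.ofReal_le_ofReal <| by
          linear_combination mul_le_mul_of_nonneg_left
            (mul_div_rpow_add_one_sub_mul_div_rpow_le h₀.le h₁.le hx.le hsum) (zero_le_one.trans hM)
  · refine (ofReal_mul_add_ofReal_one_sub_mul_le_one μ hp' _ _).trans (ENNReal.one_le_ofReal.2 ?_)
    calc 1 ≤ M * x₀ ^ α := hMx
      _ ≤ M * x ^ α := by gcongr; exacts [hx₀.1.le, hα.1.le]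

/-- invariance of the class `{μ : μ((0,x)) ≤ M x^α}` under the Markov
operator `(Pμ)(A) = p μ(g₀⁻¹(A)) + (1-p) μ(g₁⁻¹(A))` of a random iterated function
system of two increasing homeomorphisms of `[0,1]`, under the stated hypotheses
`p λ₀^{-α} + (1-p) λ₁^{-α} ≤ 1`, `M x₀^α ≥ 1` and `gᵢ⁻¹(x) < x/λᵢ` on `(0,x₀)`.
The measure of the preimage of `(0,x)` under `gᵢ` is `μ {y ∈ (0,1) : 0 < gᵢ(y) < x}`. -/
theorem markov_preserves_NMalpha (l₀ l₁ p α M x₀ : ℝ)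
    (h₀ : 0 < l₀) (h₁ : 0 < l₁) (hp : p ∈ Set.Ioo (0:ℝ) 1)
    (hα : α ∈ Set.Ioo (0:ℝ) 1) (hM : 0 < M) (hx₀ : x₀ ∈ Set.Ioo (0:ℝ) 1)
    (hsum : p * l₀ ^ (-α) + (1 - p) * l₁ ^ (-α) ≤ 1)
    (hMx : 1 ≤ M * x₀ ^ α)
    (g₀ g₁ : ℝ → ℝ)
    (hc₀ : ContinuousOn g₀ (Set.Icc 0 1)) (hc₁ : ContinuousOn g₁ (Set.Icc 0 1))
    (hm₀ : StrictMonoOn g₀ (Set.Icc 0 1)) (hm₁ : StrictMonoOn g₁ (Set.Icc 0 1))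
    (him₀ : g₀ '' Set.Icc 0 1 = Set.Icc 0 1) (him₁ : g₁ '' Set.Icc 0 1 = Set.Icc 0 1)
    (hinv₀ : ∀ x ∈ Set.Ioo 0 x₀, ∀ y ∈ Set.Icc (0:ℝ) 1, g₀ y = x → y < x / l₀)
    (hinv₁ : ∀ x ∈ Set.Ioo 0 x₀, ∀ y ∈ Set.Icc (0:ℝ) 1, g₁ y = x → y < x / l₁)
    (μ : Measure ↥(Set.Ioo (0:ℝ) 1)) (hμ : IsProbabilityMeasure μ)
    (hμb : ∀ x ∈ Set.Ioo (0:ℝ) 1,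
      μ {y : ↥(Set.Ioo (0:ℝ) 1) | (y:ℝ) < x} ≤ ENNReal.ofReal (M * x ^ α)) :
    ∀ x ∈ Set.Ioo (0:ℝ) 1,
      ENNReal.ofReal p *
          μ {y : ↥(Set.Ioo (0:ℝ) 1) | 0 < g₀ (y:ℝ) ∧ g₀ (y:ℝ) < x}
        + ENNReal.ofReal (1 - p) *
          μ {y : ↥(Set.Ioo (0:ℝ) 1) | 0 < g₁ (y:ℝ) ∧ g₁ (y:ℝ) < x}
        ≤ ENNReal.ofReal (M * x ^ α) :=
  markov_preserves_NMalpha_general l₀ l₁ p α M x₀ h₀ h₁ hp hα hx₀ hsum hMx g₀ g₁ hinv₀ hinv₁ μ hμ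
    hμb
end
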